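/- If sᵢ ∈ C and D = C ∩ sᵢCsᵢ, then ∂ᵢ is defined on H_C and ∂ᵢ(H_C) ⊆ H_D. -/

import Mathlib

open MvPolynomial

/-- The ring `H = Fun(Sₙ, ℂ[t₁,…,tₙ])`, with pointwise operations. -/
abbrev Hr (n : ℕ) := Equiv.Perm (Fin n) → MvPolynomial (Fin n) ℂ

/-- The element `xᵢ ∈ H`, given by `v ↦ t_{v(i)}`. -/
noncomputable def xH {n : ℕ} (i : Fin n) : Hr n := fun v => X (v i)

/-- The element `tᵢ ∈ H`, the constant function `v ↦ tᵢ`. -/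
noncomputable def tH {n : ℕ} (i : Fin n) : Hr n := fun _ => X i

/-- The right star action on `H`: `(g ∗ w)(v) = g(v w⁻¹)`. -/
noncomputable def starH {n : ℕ} (g : Hr n) (w : Equiv.Perm (Fin n)) : Hr n :=
  fun v => g (v * w⁻¹)

/-- The left dot action on `H`:
`(w · g)(v; t₁,…,tₙ) = g(w⁻¹ v; t_{w(1)},…,t_{w(n)})`. -/
noncomputable def dotH {n : ℕ} (w : Equiv.Perm (Fin n)) (g : Hr n) : Hr n :=
  fun v => rename (⇑w) (g (w⁻¹ * v))


/-- `f` satisfies the divisibility condition `τ` for a transposition `τ = (j ↔ k)`: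
`f − f∗τ` is a multiple of `xⱼ − xₖ` in `H` (i.e. pointwise, with quotients in
`ℂ[t₁,…,tₙ]`). -/
def condP {n : ℕ} (τ : Equiv.Perm (Fin n)) (f : Hr n) : Prop :=
  ∀ j k : Fin n, τ = Equiv.swap j k → (xH j - xH k) ∣ (f - starH f τ)

/-- The subring `H_C` of elements satisfying all conditions in a set `C` of
transpositions. -/
def HCset {n : ℕ} (C : Set (Equiv.Perm (Fin n))) : Set (Hr n) :=
  {f | ∀ τ ∈ C, condP τ f}

/- ### Auxiliary lemmas -/

lemma prime_X_sub_X {σ : Type*} [DecidableEq σ] {c d : σ} (h : c ≠ d) :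
    Prime (X c - X d : MvPolynomial σ ℂ) := by
  let e : σ ≃ Option {i : σ // i ≠ d} := (Equiv.optionSubtypeNe d).symm
  let A := (renameEquiv ℂ e).trans (optionEquivLeft ℂ {i : σ // i ≠ d})
  rw [← MulEquiv.prime_iff A.toRingEquiv.toMulEquiv]
  have hc : e c = some ⟨c, h⟩ := Equiv.optionSubtypeNe_symm_of_ne h
  have hd : e d = none := Equiv.optionSubtypeNe_symm_self d
  have : A (X c - X d) = -(Polynomial.X - Polynomial.C (X ⟨c, h⟩)) := by
    simp only [A, map_sub, AlgEquiv.trans_apply, renameEquiv_apply, rename_X, hc, hd,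
      optionEquivLeft_X_some, optionEquivLeft_X_none]
    ring
  rw [show (A.toRingEquiv.toMulEquiv : MvPolynomial σ ℂ → _) (X c - X d) = A (X c - X d) from rfl,
    this]
  exact (Polynomial.prime_X_sub_C _).neg

lemma not_dvd_X_sub_X {σ : Type*} [DecidableEq σ] {c d e f : σ} (hef : e ≠ f)
    (h1 : ¬(e = c ∧ f = d)) (h2 : ¬(e = d ∧ f = c)) :
    ¬ (X c - X d : MvPolynomial σ ℂ) ∣ (X e - X f) := by
  rintro ⟨m, hm⟩
  let φ := aeval (R := ℂ) (fun i => if i = d then X c else (X i : MvPolynomial σ ℂ))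
  have := congrArg φ hm
  simp only [φ, map_sub, map_mul, aeval_X, if_pos rfl, ite_self, if_true] at this
  rw [sub_self, zero_mul, sub_eq_zero] at this
  split_ifs at this with he hf hf
  · exact hef (he.trans hf.symm)
  · exact h2 ⟨he, (X_injective this).symm⟩
  · exact h1 ⟨X_injective this, hf⟩
  · exact hef (X_injective this)

lemma starH_sub {n : ℕ} (f g : Hr n) (w : Equiv.Perm (Fin n)) :
    starH (f - g) w = starH f w - starH g w := rfl

lemma starH_mul {n : ℕ} (f g : Hr n) (w : Equiv.Perm (Fin n)) :
    starH (f * g) w = starH f w * starH g w := rfl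

lemma starH_starH {n : ℕ} (f : Hr n) (w₁ w₂ : Equiv.Perm (Fin n)) :
    starH (starH f w₁) w₂ = starH f (w₁ * w₂) := by
  funext v; simp [starH, mul_assoc]

lemma starH_one {n : ℕ} (f : Hr n) : starH f 1 = f := by
  funext v; simp [starH]

lemma starH_xH {n : ℕ} (i : Fin n) (w : Equiv.Perm (Fin n)) :
    starH (xH i) w = xH (w⁻¹ i) := rfl

lemma starH_dvd {n : ℕ} {f g : Hr n} (w : Equiv.Perm (Fin n)) (h : f ∣ g) :
    starH f w ∣ starH g w := by
  obtain ⟨m, hm⟩ := h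
  exact ⟨starH m w, by rw [hm, starH_mul]⟩

lemma pi_dvd {n : ℕ} {p q : Hr n} (h : ∀ v, p v ∣ q v) : p ∣ q :=
  ⟨fun v => (h v).choose, funext fun v => (h v).choose_spec⟩

/-- if `s = swap a b ∈ C` (with `b = a + 1`) and `D = C ∩ sCs`, then
the divided difference `∂` is defined on `HCset C` and `∂(HCset C) ⊆ HCset D`. -/
theorem stability_corollary (n : ℕ) (a b : Fin n) (hab : (a : ℕ) + 1 = b)
    (C : Set (Equiv.Perm (Fin n)))
    (hC : ∀ τ ∈ C, Equiv.Perm.IsSwap τ)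
    (hs : Equiv.swap a b ∈ C) :
    ∀ f ∈ HCset C, ∃ g : Hr n,
      f - starH f (Equiv.swap a b) = (xH a - xH b) * g ∧
      g ∈ HCset {τ | τ ∈ C ∧ Equiv.swap a b * τ * Equiv.swap a b ∈ C} := by
  intro f hf
  have habne : a ≠ b := by
    intro h; rw [h] at hab; omega
  set s : Equiv.Perm (Fin n) := Equiv.swap a b with hsdef
  obtain ⟨g, hg⟩ := hf s hs a b rfl
  refine ⟨g, hg, ?_⟩
  rintro τ ⟨hτC, hτ'C⟩ j k hjk
  have hjkne : j ≠ k := by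
    rintro rfl
    obtain ⟨x, y, hxy, hτ⟩ := hC τ hτC
    rw [hjk, Equiv.swap_self] at hτ
    exact hxy (Eq.symm (by simpa using congrArg (fun (p : Equiv.Perm (Fin n)) => p x) hτ.symm))
  set d : Hr n := xH a - xH b with hd
  set e : Hr n := xH j - xH k with he
  have hsinv : s⁻¹ = s := Equiv.swap_inv a b
  have hτinv : τ⁻¹ = τ := by rw [hjk]; exact Equiv.swap_inv j k
  have hss : s * s = 1 := Equiv.swap_mul_self a b
  have h1 : e ∣ f - starH f τ := hf τ hτC j k hjk
  have hτ'eq : s * τ * s = Equiv.swap (s j) (s k) := by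
    conv_lhs => rw [hjk]
    rw [Equiv.swap_apply_apply s j k, hsinv]
  have h2pre : (xH (s j) - xH (s k)) ∣ f - starH f (s * τ * s) :=
    hf _ hτ'C (s j) (s k) hτ'eq
  have h2 : e ∣ starH f s - starH f (s * τ) := by
    have hds := starH_dvd s h2pre
    rw [starH_sub, starH_sub, starH_starH, starH_xH, starH_xH, hsinv,
      mul_assoc, hss, mul_one] at hds
    have hj : s (s j) = j := Equiv.swap_apply_self a b j
    have hk : s (s k) = k := Equiv.swap_apply_self a b k
    rwa [hj, hk] at hds
  have hkeydvd : ∀ c : Fin n, e ∣ xH (τ c) - xH c := by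
    intro c
    rw [hjk]
    rcases eq_or_ne c j with rfl | hcj
    · rw [Equiv.swap_apply_left]
      exact ⟨-1, by rw [he]; ring⟩
    rcases eq_or_ne c k with rfl | hck
    · rw [Equiv.swap_apply_right]
    · rw [Equiv.swap_apply_of_ne_of_ne hcj hck, sub_self]
      exact dvd_zero _
  have h3 : e ∣ starH d τ - d := by
    have heq : starH d τ - d = (xH (τ a) - xH a) - (xH (τ b) - xH b) := by
      rw [hd, starH_sub, starH_xH, starH_xH, hτinv]; ring
    rw [heq]
    exact dvd_sub (hkeydvd a) (hkeydvd b)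
  have hdgτ : starH d τ * starH g τ = starH f τ - starH f (s * τ) := by
    rw [← starH_mul, ← hg, starH_sub, starH_starH]
  have hkey : e ∣ d * (g - starH g τ) := by
    have hiden : d * (g - starH g τ)
        = (f - starH f τ) - (starH f s - starH f (s * τ)) + (starH d τ - d) * starH g τ := by
      linear_combination -hg - hdgτ
    rw [hiden]
    exact dvd_add (dvd_sub h1 h2) (h3.mul_right _)
  by_cases hts : τ = s
  · rw [hts]
    have hds : starH d s = -d := by
      rw [hd, starH_sub, starH_xH, starH_xH, hsinv, hsdef,
        Equiv.swap_apply_left, Equiv.swap_apply_right]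
      ring
    have h4 := congrArg (fun p => starH p s) hg
    simp only [starH_sub, starH_mul, starH_starH, hss, starH_one] at h4
    rw [hds] at h4
    have h0 : d * (g - starH g s) = 0 := by linear_combination -hg - h4
    have hzero : g - starH g s = 0 := by
      funext v
      have hv := congrFun h0 v
      have hv' : (X (v a) - X (v b)) * ((g - starH g s) v) = 0 := hv
      have hne : (X (v a) - X (v b) : MvPolynomial (Fin n) ℂ) ≠ 0 :=
        sub_ne_zero_of_ne (fun hXX => habne (v.injective (X_injective hXX)))
      rcases mul_eq_zero.mp hv' with h | h
      · exact absurd h hne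
      · exact h
    rw [hzero]
    exact dvd_zero _
  · have hpairs1 : ¬(j = a ∧ k = b) := by
      rintro ⟨rfl, rfl⟩; exact hts hjk
    have hpairs2 : ¬(j = b ∧ k = a) := by
      rintro ⟨rfl, rfl⟩; exact hts (by rw [hjk, Equiv.swap_comm])
    obtain ⟨m, hm⟩ := hkey
    apply pi_dvd
    intro v
    have hprime : Prime (e v) := by
      show Prime (X (v j) - X (v k) : MvPolynomial (Fin n) ℂ)
      exact prime_X_sub_X (fun h => hjkne (v.injective h))
    have hnd : ¬ (e v) ∣ (d v) := by
      show ¬ (X (v j) - X (v k) : MvPolynomial (Fin n) ℂ) ∣ (X (v a) - X (v b))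
      apply not_dvd_X_sub_X (fun hvab => habne (v.injective hvab))
      · rintro ⟨h1', h2'⟩
        exact hpairs1 ⟨(v.injective h1').symm, (v.injective h2').symm⟩
      · rintro ⟨h1', h2'⟩
        exact hpairs2 ⟨(v.injective h2').symm, (v.injective h1').symm⟩
    have hdvdv : e v ∣ d v * ((g - starH g τ) v) := by
      refine ⟨m v, ?_⟩
      exact congrFun hm v
    exact (hprime.2.2 _ _ hdvdv).resolve_left hnd
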